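/- arXiv:1801.04504 — 2 statements merged into one kernel-verified Lean document; each statement's English description precedes it below -/
import Mathlib

section
/- Let μ be a real number and let k, i be integers with 1 ≤ k < i. Define f : ℝ → ℝ by f(u) = Σ_{l=k}^{i-1} (u^l / l!) · ( Σ_{l'=0}^{i-l-1} (μ - u)^{l'} / l'! ). Then f is differentiable on ℝ and for every real u its derivative is f'(u) = (u^{k-1} / (k-1)!) · Σ_{l=0}^{i-k-1} (μ - u)^l / l!. -/
/-!
Differentiating the truncated exponential series `E n x = ∑_{m<n} x^m/m!` gives `E (n-1) x`, so
by the product rule the `l`-th summand has derivative `g l - g (l+1)`, where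
`g l = u^(l-1)/(l-1)! · E (i-l) (μ-u)`. The sum over `k ≤ l < i` telescopes to `g k - g i = g k`.
-/

open Finset

section
variable {𝕜 : Type*} [NontriviallyNormedField 𝕜] [CharZero 𝕜]

theorem hasDerivAt_pow_succ_div_factorial (n : ℕ) (x : 𝕜) :
    HasDerivAt (fun x : 𝕜 => x ^ (n + 1) / ((n + 1).factorial : 𝕜)) (x ^ n / n.factorial) x := by
  refine ((hasDerivAt_pow (n + 1) x).div_const ((n + 1).factorial : 𝕜)).congr_deriv ?_
  rw [Nat.factorial_succ, Nat.cast_mul, Nat.add_sub_cancel, mul_div_mul_left]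
  exact_mod_cast n.succ_ne_zero

theorem hasDerivAt_sum_range_succ_pow_div_factorial (n : ℕ) (x : 𝕜) :
    HasDerivAt (fun x : 𝕜 => ∑ m ∈ range (n + 1), x ^ m / (m.factorial : 𝕜))
      (∑ m ∈ range n, x ^ m / (m.factorial : 𝕜)) x := by
  simp only [sum_range_succ']
  simpa using (HasDerivAt.fun_sum fun m _ => hasDerivAt_pow_succ_div_factorial m x).add_const
    ((0 : 𝕜) ^ 0 / (Nat.factorial 0 : 𝕜))

theorem hasDerivAt_pow_succ_div_factorial_mul_sum_range_sub (c : 𝕜) (l n : ℕ) (x : 𝕜) :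
    HasDerivAt (fun x : 𝕜 => x ^ (l + 1) / ((l + 1).factorial : 𝕜) *
        ∑ m ∈ range (n + 1), (c - x) ^ m / (m.factorial : 𝕜))
      (x ^ l / l.factorial * ∑ m ∈ range (n + 1), (c - x) ^ m / (m.factorial : 𝕜) -
        x ^ (l + 1) / ((l + 1).factorial : 𝕜) * ∑ m ∈ range n, (c - x) ^ m / (m.factorial : 𝕜))
      x := by
  have hsum := (hasDerivAt_sum_range_succ_pow_div_factorial n (c - x)).comp x
    ((hasDerivAt_id x).const_sub c)
  refine ((hasDerivAt_pow_succ_div_factorial l x).mul hsum).congr_deriv ?_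
  simp only [Function.comp_apply]
  ring

end

/-- The telescoping-derivative identity underlying the marginal PDF of the
k-th smallest user distance (Appendix A of the paper): for `1 ≤ k < i`, the
function `f u = ∑_{l=k}^{i-1} (u^l / l!) ∑_{l'=0}^{i-l-1} (μ - u)^{l'} / l'!`
is differentiable with derivative
`f' u = (u^{k-1}/(k-1)!) ∑_{l=0}^{i-k-1} (μ - u)^l / l!`. -/
theorem stmt_0 (μ : ℝ) (k i : ℕ) (hk : 1 ≤ k) (hki : k < i) :
    Differentiable ℝ (fun u : ℝ =>
      ∑ l ∈ Finset.Ico k i, u ^ l / (l.factorial : ℝ) *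
        ∑ m ∈ Finset.range (i - l), (μ - u) ^ m / (m.factorial : ℝ)) ∧
    ∀ u : ℝ,
      deriv (fun u : ℝ =>
        ∑ l ∈ Finset.Ico k i, u ^ l / (l.factorial : ℝ) *
          ∑ m ∈ Finset.range (i - l), (μ - u) ^ m / (m.factorial : ℝ)) u
      = u ^ (k - 1) / ((k - 1).factorial : ℝ) *
          ∑ m ∈ Finset.range (i - k), (μ - u) ^ m / (m.factorial : ℝ) := by
  suffices key : ∀ u : ℝ, HasDerivAt (fun u : ℝ =>
      ∑ l ∈ Ico k i, u ^ l / (l.factorial : ℝ) *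
        ∑ m ∈ range (i - l), (μ - u) ^ m / (m.factorial : ℝ))
      (u ^ (k - 1) / ((k - 1).factorial : ℝ) *
        ∑ m ∈ range (i - k), (μ - u) ^ m / (m.factorial : ℝ)) u from
    ⟨fun u => (key u).differentiableAt, fun u => (key u).deriv⟩
  intro u
  let g : ℕ → ℝ := fun l => u ^ (l - 1) / ((l - 1).factorial : ℝ) *
    ∑ m ∈ range (i - l), (μ - u) ^ m / (m.factorial : ℝ)
  have hterm : ∀ l ∈ Ico k i, HasDerivAt (fun u : ℝ => u ^ l / (l.factorial : ℝ) *
      ∑ m ∈ range (i - l), (μ - u) ^ m / (m.factorial : ℝ)) (g l - g (l + 1)) u := by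
    intro l hl
    obtain ⟨hkl, hli⟩ := mem_Ico.mp hl
    obtain ⟨l, rfl⟩ : ∃ l', l = l' + 1 := ⟨l - 1, by omega⟩
    obtain ⟨n, hn⟩ : ∃ n, i - (l + 1) = n + 1 := ⟨i - (l + 2), by omega⟩
    have hn' : i - (l + 1 + 1) = n := by omega
    simpa only [g, hn, hn', Nat.add_sub_cancel] using
      hasDerivAt_pow_succ_div_factorial_mul_sum_range_sub μ l n u
  have htelescope : ∑ l ∈ Ico k i, (g l - g (l + 1)) = g k := by
    have hgi : g i = 0 := by simp [g]
    simpa only [neg_sub_neg, hgi, neg_zero, zero_sub, neg_neg] using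
      sum_Ico_sub (fun l => -g l) hki.le
  exact (HasDerivAt.fun_sum hterm).congr_deriv htelescope
end

section
/- Let Δ > 0, λ > 0, and 0 ≤ L₁ < L₂ be real numbers, and let j, i be integers with 1 ≤ j < i. Set μ = Δ(L₂² - L₁²)λ and C = 1 - Σ_{l=0}^{i-1} e^{-μ} μ^l / l!, assume C ≠ 0, and define f(r, s) = ( (2Δλ r)(2Δλ s) / C ) · e^{-Δ(s² - L₁²)λ} · ( (Δ(r² - L₁²)λ)^{j-1} / (j-1)! ) · ( (Δ(s² - r²)λ)^{i-j-1} / (i-j-1)! ). Then ∫_{L₁}^{L₂} ( ∫_{L₁}^{s} f(r, s) dr ) ds = 1. -/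
/-!
With `φ(x) = Δλ(x² - L₁²)`, the factors `2Δλr` and `2Δλs` of the density are `φ'(r)` and `φ'(s)`.
Substituting `u = φ(r)` turns the inner integral into the Beta integral
`∫₀^φ(s) u^a (φ(s) - u)^b du = φ(s)^(a+b+1) a! b! / (a+b+1)!`, and substituting `u = φ(s)` turns
the outer one into the incomplete Gamma integral `∫₀^μ e^(-u) u^n / n! du`, which equals
`1 - ∑_{l ≤ n} e^(-μ) μ^l / l!`, i.e. the normalising constant `C` for `n = i - 1`.
-/

open intervalIntegral

lemma integral_pow_mul_sub_pow_succ (a b : ℕ) (c : ℝ) :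
    ((a : ℝ) + 1) * ∫ x in (0 : ℝ)..c, x ^ a * (c - x) ^ (b + 1)
      = ((b : ℝ) + 1) * ∫ x in (0 : ℝ)..c, x ^ (a + 1) * (c - x) ^ b := by
  have hu : ∀ x ∈ Set.uIcc (0 : ℝ) c,
      HasDerivAt (fun x => (c - x) ^ (b + 1)) (-(((b : ℝ) + 1) * (c - x) ^ b)) x := by
    intro x _
    refine (((hasDerivAt_id' x).const_sub c).pow (b + 1)).congr_deriv ?_
    push_cast
    ring
  have hv : ∀ x ∈ Set.uIcc (0 : ℝ) c,
      HasDerivAt (fun x => x ^ (a + 1)) (((a : ℝ) + 1) * x ^ a) x := by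
    intro x _
    exact (hasDerivAt_pow (a + 1) x).congr_deriv (by simp)
  have parts := integral_mul_deriv_eq_deriv_mul hu hv
    ((by fun_prop : Continuous _).intervalIntegrable _ _)
    ((by fun_prop : Continuous _).intervalIntegrable _ _)
  calc ((a : ℝ) + 1) * ∫ x in (0 : ℝ)..c, x ^ a * (c - x) ^ (b + 1)
      = ∫ x in (0 : ℝ)..c, (c - x) ^ (b + 1) * (((a : ℝ) + 1) * x ^ a) := by
        rw [← integral_const_mul]
        exact integral_congr fun x _ => by ring
    _ = -∫ x in (0 : ℝ)..c, -(((b : ℝ) + 1) * (c - x) ^ b) * x ^ (a + 1) := by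
        rw [parts]
        simp
    _ = ((b : ℝ) + 1) * ∫ x in (0 : ℝ)..c, x ^ (a + 1) * (c - x) ^ b := by
        rw [← integral_neg, ← integral_const_mul]
        exact integral_congr fun x _ => by ring

lemma integral_pow_mul_sub_pow (a b : ℕ) (c : ℝ) :
    ∫ x in (0 : ℝ)..c, x ^ a * (c - x) ^ b
      = c ^ (a + b + 1) * (a.factorial * b.factorial) / (a + b + 1).factorial := by
  induction b generalizing a with
  | zero =>
    simp only [pow_zero, mul_one, integral_pow, Nat.factorial_zero, Nat.add_zero,
      Nat.factorial_succ]
    push_cast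
    field_simp
    ring
  | succ b ih =>
    have ha : (a : ℝ) + 1 ≠ 0 := by positivity
    rw [← mul_right_inj' ha, integral_pow_mul_sub_pow_succ, ih,
      show a + 1 + b + 1 = a + (b + 1) + 1 by ring]
    simp only [Nat.factorial_succ]
    push_cast
    field_simp

lemma integral_deriv_mul_pow_mul_sub_pow {φ φ' : ℝ → ℝ} (hφ : ∀ x, HasDerivAt φ (φ' x) x)
    (hφ' : Continuous φ') {x₀ : ℝ} (hx₀ : φ x₀ = 0) (a b : ℕ) (s : ℝ) :
    ∫ r in x₀..s, φ' r * (φ r ^ a * (φ s - φ r) ^ b)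
      = φ s ^ (a + b + 1) * (a.factorial * b.factorial) / (a + b + 1).factorial := by
  have subst := integral_comp_mul_deriv (a := x₀) (b := s) (fun x _ => hφ x) hφ'.continuousOn
    (g := fun u => u ^ a * (φ s - u) ^ b) (by fun_prop)
  rw [hx₀] at subst
  rw [← integral_pow_mul_sub_pow, ← subst]
  exact integral_congr fun r _ => by simp only [Function.comp_apply]; ring

lemma hasDerivAt_sum_exp_neg_mul_pow_div_factorial (n : ℕ) (x : ℝ) :
    HasDerivAt (fun u => ∑ l ∈ Finset.range (n + 1), Real.exp (-u) * u ^ l / l.factorial)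
      (-(Real.exp (-x) * x ^ n / n.factorial)) x := by
  induction n with
  | zero => simpa using (hasDerivAt_neg x).exp
  | succ n ih =>
    have hterm : HasDerivAt (fun u => Real.exp (-u) * u ^ (n + 1) / (n + 1).factorial)
        (Real.exp (-x) * x ^ n / n.factorial
          - Real.exp (-x) * x ^ (n + 1) / (n + 1).factorial) x := by
      refine (((hasDerivAt_neg x).exp.mul (hasDerivAt_pow (n + 1) x)).div_const
        ((n + 1).factorial : ℝ)).congr_deriv ?_
      simp only [Nat.add_sub_cancel, Nat.factorial_succ]
      push_cast
      field_simp
      ring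
    have hsplit : (fun u => ∑ l ∈ Finset.range (n + 1 + 1), Real.exp (-u) * u ^ l / l.factorial)
        = fun u => ∑ l ∈ Finset.range (n + 1), Real.exp (-u) * u ^ l / l.factorial
          + Real.exp (-u) * u ^ (n + 1) / (n + 1).factorial :=
      funext fun u => Finset.sum_range_succ _ _
    rw [hsplit]
    exact (ih.add hterm).congr_deriv (by ring)

lemma integral_exp_neg_mul_pow_div_factorial (n : ℕ) (m : ℝ) :
    ∫ u in (0 : ℝ)..m, Real.exp (-u) * u ^ n / n.factorial
      = 1 - ∑ l ∈ Finset.range (n + 1), Real.exp (-m) * m ^ l / l.factorial := by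
  have := fun x => (hasDerivAt_sum_exp_neg_mul_pow_div_factorial n x).neg
  simp only [neg_neg] at this
  rw [integral_eq_sub_of_hasDerivAt (fun x _ => this x)
    ((by fun_prop : Continuous _).intervalIntegrable _ _)]
  simp [Finset.sum_range_succ']
  ring

theorem stmt_5_general (Δ lam L₁ L₂ : ℝ) (j i : ℕ) (hj : 1 ≤ j) (hji : j < i)
    (μ C : ℝ) (hμ : μ = Δ * (L₂ ^ 2 - L₁ ^ 2) * lam)
    (hC : C = 1 - ∑ l ∈ Finset.range i, Real.exp (-μ) * μ ^ l / (l.factorial : ℝ))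
    (hC0 : C ≠ 0)
    (f : ℝ → ℝ → ℝ)
    (hf : ∀ r s, f r s = ((2 * Δ * lam * r) * (2 * Δ * lam * s) / C) *
      Real.exp (-(Δ * (s ^ 2 - L₁ ^ 2) * lam)) *
      ((Δ * (r ^ 2 - L₁ ^ 2) * lam) ^ (j - 1) / ((j - 1).factorial : ℝ)) *
      ((Δ * (s ^ 2 - r ^ 2) * lam) ^ (i - j - 1) / ((i - j - 1).factorial : ℝ))) :
    (∫ s in L₁..L₂, ∫ r in L₁..s, f r s) = 1 := by
  obtain ⟨a, rfl⟩ : ∃ a, j = a + 1 := ⟨j - 1, by omega⟩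
  obtain ⟨b, rfl⟩ : ∃ b, i = a + b + 2 := ⟨i - (a + 1) - 1, by omega⟩
  set φ : ℝ → ℝ := fun x => Δ * (x ^ 2 - L₁ ^ 2) * lam
  have hφ (x : ℝ) : HasDerivAt φ (2 * Δ * lam * x) x :=
    ((((hasDerivAt_pow 2 x).sub_const _).const_mul Δ).mul_const lam).congr_deriv (by ring)
  set g : ℝ → ℝ := fun u => Real.exp (-u) * u ^ (a + b + 1) / (a + b + 1).factorial
  have inner (s : ℝ) : ∫ r in L₁..s, f r s = g (φ s) * (2 * Δ * lam * s) / C := by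
    have hexp : a + b + 2 - (a + 1) - 1 = b := by omega
    calc ∫ r in L₁..s, f r s
        = 2 * Δ * lam * s * Real.exp (-φ s) / (C * a.factorial * b.factorial) *
            ∫ r in L₁..s, 2 * Δ * lam * r * (φ r ^ a * (φ s - φ r) ^ b) := by
          rw [← integral_const_mul]
          refine integral_congr fun r _ => ?_
          simp only [hf, φ, hexp, Nat.add_sub_cancel]
          field_simp
          ring
      _ = g (φ s) * (2 * Δ * lam * s) / C := by
          rw [integral_deriv_mul_pow_mul_sub_pow hφ (by fun_prop) (by simp [φ])]
          simp only [g]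
          field_simp
  calc ∫ s in L₁..L₂, ∫ r in L₁..s, f r s
      = (∫ s in L₁..L₂, (g ∘ φ) s * (2 * Δ * lam * s)) / C := by
        simp only [inner, integral_div, Function.comp_apply]
    _ = (∫ u in (0 : ℝ)..μ, g u) / C := by
        rw [integral_comp_mul_deriv (fun x _ => hφ x) (by fun_prop) (by fun_prop)]
        simp [φ, hμ]
    _ = 1 := by
        rw [integral_exp_neg_mul_pow_div_factorial, ← hC, div_self hC0]

/-- The joint density `f_{d_j, d_i | S_{K₂}}` of Theorem 2 of the paper
integrates to 1 over the region `{(r, s) : L₁ ≤ r ≤ s ≤ L₂}`. -/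
theorem stmt_5 (Δ lam L₁ L₂ : ℝ) (hΔ : 0 < Δ) (hlam : 0 < lam)
    (hL₁ : 0 ≤ L₁) (hL : L₁ < L₂) (j i : ℕ) (hj : 1 ≤ j) (hji : j < i)
    (μ C : ℝ) (hμ : μ = Δ * (L₂ ^ 2 - L₁ ^ 2) * lam)
    (hC : C = 1 - ∑ l ∈ Finset.range i, Real.exp (-μ) * μ ^ l / (l.factorial : ℝ))
    (hC0 : C ≠ 0)
    (f : ℝ → ℝ → ℝ)
    (hf : ∀ r s, f r s = ((2 * Δ * lam * r) * (2 * Δ * lam * s) / C) *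
      Real.exp (-(Δ * (s ^ 2 - L₁ ^ 2) * lam)) *
      ((Δ * (r ^ 2 - L₁ ^ 2) * lam) ^ (j - 1) / ((j - 1).factorial : ℝ)) *
      ((Δ * (s ^ 2 - r ^ 2) * lam) ^ (i - j - 1) / ((i - j - 1).factorial : ℝ))) :
    (∫ s in L₁..L₂, ∫ r in L₁..s, f r s) = 1 :=
  stmt_5_general Δ lam L₁ L₂ j i hj hji μ C hμ hC hC0 f hf
end
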